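/- arXiv:2604.05765 — 2 statements merged into one kernel-verified Lean document; each statement's English description precedes it below -/
import Mathlib

section
/- Let μ₀ > 0, 1/2 < β < 1, γ > 0, t > 0 and μ < μ₀ − γt. Then (μ₀−μ−γt)^β · ∫₀ᵗ (μ₀−μ−γs)^{−1/2−β} (t−s)^{−1/2} ds ≤ C/γ^{1/2}, with C depending only on β. -/
/-!
After the substitution `u = t - s` and with `a = μ₀ - μ - γt > 0`, the integral becomes
`∫₀ᵗ (a + γu)^(-1/2-β) u^(-1/2) du`. Split it at the scale `m = a/γ` where the two terms of
`a + γu` balance: below `m` bound `a + γu ≥ a`, which leaves `a^(-1/2-β) ∫₀^m u^(-1/2) = 2a^(-β) γ^(-1/2)`;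
above `m` bound `a + γu ≥ γu`, which leaves `γ^(-1/2-β) ∫ₘ^∞ u^(-1-β) = a^(-β) γ^(-1/2) / β`.
Multiplying by `a^β` gives the constant `2 + 1/β`.
-/

open Real MeasureTheory intervalIntegral Set

section Kernel

variable {a γ e : ℝ}

lemma rpow_add_mul_mul_rpow_le (ha : 0 < a) (hγ : 0 ≤ γ) (he : e ≤ 0) {u : ℝ} (hu : 0 ≤ u) :
    (a + γ * u) ^ e * u ^ (-(1:ℝ)/2) ≤ a ^ e * u ^ (-(1:ℝ)/2) :=
  mul_le_mul_of_nonneg_right (rpow_le_rpow_of_nonpos ha (by nlinarith) he) (rpow_nonneg hu _)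

lemma intervalIntegrable_rpow_add_mul_mul_rpow (ha : 0 < a) (hγ : 0 ≤ γ) (he : e ≤ 0)
    (c : ℝ) (hc : 0 ≤ c) :
    IntervalIntegrable (fun u => (a + γ * u) ^ e * u ^ (-(1:ℝ)/2)) volume 0 c := by
  refine ((intervalIntegrable_rpow' (r := -(1:ℝ)/2) (by norm_num)).const_mul (a ^ e)).mono_fun'
    (by fun_prop) ?_
  filter_upwards [ae_restrict_mem measurableSet_uIoc] with u hu
  rw [uIoc_of_le hc] at hu
  have hu0 : 0 ≤ u := hu.1.le
  rw [norm_of_nonneg (by positivity)]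
  exact rpow_add_mul_mul_rpow_le ha hγ he hu0

lemma integral_rpow_add_mul_mul_rpow_le_head (ha : 0 < a) (hγ : 0 ≤ γ) (he : e ≤ 0)
    {c : ℝ} (hc : 0 ≤ c) :
    ∫ u in (0:ℝ)..c, (a + γ * u) ^ e * u ^ (-(1:ℝ)/2) ≤ 2 * a ^ e * c ^ ((1:ℝ)/2) := by
  calc ∫ u in (0:ℝ)..c, (a + γ * u) ^ e * u ^ (-(1:ℝ)/2)
      ≤ ∫ u in (0:ℝ)..c, a ^ e * u ^ (-(1:ℝ)/2) :=
        integral_mono_on hc (intervalIntegrable_rpow_add_mul_mul_rpow ha hγ he c hc)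
          ((intervalIntegrable_rpow' (r := -(1:ℝ)/2) (by norm_num)).const_mul _)
          (fun u hu => rpow_add_mul_mul_rpow_le ha hγ he hu.1)
    _ = 2 * a ^ e * c ^ ((1:ℝ)/2) := by
        rw [intervalIntegral.integral_const_mul, integral_rpow (Or.inl (by norm_num)),
          zero_rpow (by norm_num)]
        norm_num
        ring

end Kernel

lemma integral_rpow_add_mul_mul_rpow_le_tail {a γ β m T : ℝ} (ha : 0 ≤ a) (hγ : 0 < γ)
    (hβ : 0 < β) (hm : 0 < m) (hmT : m ≤ T) :
    ∫ u in m..T, (a + γ * u) ^ (-(1:ℝ)/2 - β) * u ^ (-(1:ℝ)/2)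
      ≤ γ ^ (-(1:ℝ)/2 - β) * m ^ (-β) / β := by
  have hmT' : (0:ℝ) ∉ uIcc m T := notMem_uIcc_of_lt hm (hm.trans_le hmT)
  calc ∫ u in m..T, (a + γ * u) ^ (-(1:ℝ)/2 - β) * u ^ (-(1:ℝ)/2)
      ≤ ∫ u in m..T, γ ^ (-(1:ℝ)/2 - β) * u ^ (-1 - β) := by
        refine integral_mono_on hmT ?_ ((intervalIntegrable_rpow (Or.inr hmT')).const_mul _) ?_
        · refine ContinuousOn.intervalIntegrable fun u hu => ?_
          rw [uIcc_of_le hmT] at hu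
          have hu0 : 0 < u := hm.trans_le hu.1
          exact ((continuousAt_const.add (continuousAt_const.mul continuousAt_id)).rpow_const
            (Or.inl (by positivity : 0 < a + γ * u).ne')).mul
            (continuousAt_id.rpow_const (Or.inl hu0.ne')) |>.continuousWithinAt
        · intro u hu
          have hu0 : 0 < u := hm.trans_le hu.1
          calc (a + γ * u) ^ (-(1:ℝ)/2 - β) * u ^ (-(1:ℝ)/2)
              ≤ (γ * u) ^ (-(1:ℝ)/2 - β) * u ^ (-(1:ℝ)/2) :=
                mul_le_mul_of_nonneg_right
                  (rpow_le_rpow_of_nonpos (by positivity) (by linarith) (by linarith))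
                  (rpow_nonneg hu0.le _)
            _ = γ ^ (-(1:ℝ)/2 - β) * u ^ (-1 - β) := by
                rw [mul_rpow hγ.le hu0.le, mul_assoc, ← rpow_add hu0]
                ring_nf
    _ = γ ^ (-(1:ℝ)/2 - β) * ((m ^ (-β) - T ^ (-β)) / β) := by
        rw [intervalIntegral.integral_const_mul, integral_rpow (Or.inr ⟨by linarith, hmT'⟩)]
        ring_nf
    _ ≤ γ ^ (-(1:ℝ)/2 - β) * m ^ (-β) / β := by
        rw [mul_div_assoc]
        gcongr
        exact sub_le_self _ (rpow_nonneg (hm.trans_le hmT).le _)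

lemma rpow_mul_integral_rpow_add_mul_mul_rpow_le {a γ β t : ℝ} (ha : 0 < a) (hγ : 0 < γ)
    (hβ : 0 < β) (ht : 0 ≤ t) :
    a ^ β * ∫ u in (0:ℝ)..t, (a + γ * u) ^ (-(1:ℝ)/2 - β) * u ^ (-(1:ℝ)/2)
      ≤ (2 + 1/β) / γ ^ ((1:ℝ)/2) := by
  set m := a / γ
  have hm : 0 < m := by positivity
  have he : -(1:ℝ)/2 - β ≤ 0 := by linarith
  have hint := intervalIntegrable_rpow_add_mul_mul_rpow ha hγ.le he
  have head_scale : a ^ β * (a ^ (-(1:ℝ)/2 - β) * m ^ ((1:ℝ)/2)) = 1 / γ ^ ((1:ℝ)/2) := by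
    rw [div_rpow ha.le hγ.le, rpow_sub ha, neg_div, rpow_neg ha.le]
    field_simp
  have tail_scale : a ^ β * (γ ^ (-(1:ℝ)/2 - β) * m ^ (-β)) = 1 / γ ^ ((1:ℝ)/2) := by
    rw [div_rpow ha.le hγ.le, rpow_sub hγ, neg_div, rpow_neg ha.le, rpow_neg hγ.le, rpow_neg hγ.le]
    field_simp
  calc a ^ β * ∫ u in (0:ℝ)..t, (a + γ * u) ^ (-(1:ℝ)/2 - β) * u ^ (-(1:ℝ)/2)
      ≤ a ^ β * ∫ u in (0:ℝ)..max t m, (a + γ * u) ^ (-(1:ℝ)/2 - β) * u ^ (-(1:ℝ)/2) := by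
        gcongr
        refine integral_mono_interval le_rfl ht (le_max_left _ _) ?_ (hint _ (by positivity))
        filter_upwards [ae_restrict_mem measurableSet_Ioc] with u hu
        exact mul_nonneg (rpow_nonneg (by nlinarith [hu.1]) _) (rpow_nonneg hu.1.le _)
    _ = a ^ β * ((∫ u in (0:ℝ)..m, (a + γ * u) ^ (-(1:ℝ)/2 - β) * u ^ (-(1:ℝ)/2))
          + ∫ u in m..max t m, (a + γ * u) ^ (-(1:ℝ)/2 - β) * u ^ (-(1:ℝ)/2)) := by
        rw [integral_add_adjacent_intervals (hint m hm.le)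
          ((hint m hm.le).symm.trans (hint _ (by positivity)))]
    _ ≤ a ^ β * (2 * a ^ (-(1:ℝ)/2 - β) * m ^ ((1:ℝ)/2) + γ ^ (-(1:ℝ)/2 - β) * m ^ (-β) / β) := by
        gcongr
        · exact integral_rpow_add_mul_mul_rpow_le_head ha hγ.le he hm.le
        · exact integral_rpow_add_mul_mul_rpow_le_tail ha.le hγ hβ hm (le_max_right _ _)
    _ = (2 + 1/β) / γ ^ ((1:ℝ)/2) := by
        linear_combination 2 * head_scale + tail_scale / β

theorem stmt_4_general (β : ℝ) (hβ : 1/2 < β) :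
    ∃ C : ℝ, 0 < C ∧ ∀ (μ₀ γ t μ : ℝ), 0 < μ₀ → 0 < γ → 0 < t → μ < μ₀ - γ * t →
      (μ₀ - μ - γ * t) ^ β *
          ∫ s in (0:ℝ)..t, (μ₀ - μ - γ * s) ^ (-(1:ℝ)/2 - β) * (t - s) ^ (-(1:ℝ)/2)
        ≤ C / γ ^ ((1:ℝ)/2) := by
  have hβ0 : 0 < β := by linarith
  refine ⟨2 + 1/β, by positivity, fun μ₀ γ t μ _ hγ ht h => ?_⟩
  set a := μ₀ - μ - γ * t
  have hsub : ∫ s in (0:ℝ)..t, (μ₀ - μ - γ * s) ^ (-(1:ℝ)/2 - β) * (t - s) ^ (-(1:ℝ)/2)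
      = ∫ u in (0:ℝ)..t, (a + γ * u) ^ (-(1:ℝ)/2 - β) * u ^ (-(1:ℝ)/2) := by
    have hlin : ∀ s, μ₀ - μ - γ * s = a + γ * (t - s) := fun s => by ring
    simp_rw [hlin]
    simpa using integral_comp_sub_left
      (fun u => (a + γ * u) ^ (-(1:ℝ)/2 - β) * u ^ (-(1:ℝ)/2)) t (a := 0) (b := t)
  rw [hsub]
  exact rpow_mul_integral_rpow_add_mul_mul_rpow_le (by linarith) hγ hβ0 ht.le

/-- `(μ₀−μ−γt)^β ∫₀ᵗ (μ₀−μ−γs)^{−1/2−β}(t−s)^{−1/2} ds ≤ C/γ^{1/2}`, `C = C(β)`. -/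
theorem stmt_4 (β : ℝ) (hβ : 1/2 < β) (hβ1 : β < 1) :
    ∃ C : ℝ, 0 < C ∧ ∀ (μ₀ γ t μ : ℝ), 0 < μ₀ → 0 < γ → 0 < t → μ < μ₀ - γ * t →
      (μ₀ - μ - γ * t) ^ β *
          ∫ s in (0:ℝ)..t, (μ₀ - μ - γ * s) ^ (-(1:ℝ)/2 - β) * (t - s) ^ (-(1:ℝ)/2)
        ≤ C / γ ^ ((1:ℝ)/2) :=
  stmt_4_general β hβ
end

section
/- Let μ₀ > 0, 1/2 < β < 1, γ > 0, t > 0 and 0 ≤ μ < μ₀ − γt. Then (μ₀−μ−γt)^β · ∫₀ᵗ (μ₀−μ−γs)^{−1} s^{−1/2} ds ≤ C/γ^{1/2}, with C depending only on β and μ₀. -/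
/-!
On `[0, t]` the base is `μ₀ - μ - γ s = a + γ (t - s)` with `a = μ₀ - μ - γ t > 0`, and the weighted
AM–GM inequality `a ^ β d ^ (1 - β) ≤ a + d` gives `a ^ β (a + γ (t - s))⁻¹ ≤ (γ (t - s)) ^ (β - 1)`.
The left side is therefore at most `γ ^ (β - 1) ∫₀ᵗ s ^ (-1/2) (t - s) ^ (β - 1) ds`, a Beta integral
of size `≲ t ^ (β - 1/2)`; finally `γ t ≤ μ₀` turns `γ ^ (β - 1) t ^ (β - 1/2)` into
`μ₀ ^ (β - 1/2) / γ ^ (1/2)`.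
-/

open MeasureTheory intervalIntegral Set

namespace Real

lemma rpow_mul_rpow_one_sub_le_add {a d β : ℝ} (ha : 0 ≤ a) (hd : 0 ≤ d) (hβ₀ : 0 ≤ β)
    (hβ₁ : β ≤ 1) : a ^ β * d ^ (1 - β) ≤ a + d :=
  calc a ^ β * d ^ (1 - β) ≤ β * a + (1 - β) * d :=
        geom_mean_le_arith_mean2_weighted hβ₀ (by linarith) ha hd (by ring)
    _ ≤ a + d := by nlinarith

lemma rpow_mul_inv_add_le {a d β : ℝ} (ha : 0 ≤ a) (hd : 0 < d) (hβ₀ : 0 ≤ β) (hβ₁ : β ≤ 1) :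
    a ^ β * (a + d)⁻¹ ≤ d ^ (β - 1) := by
  rw [← div_eq_mul_inv, div_le_iff₀ (by positivity)]
  calc a ^ β = a ^ β * d ^ (1 - β) * d ^ (β - 1) := by
        rw [mul_assoc, ← rpow_add hd]; norm_num
    _ ≤ (a + d) * d ^ (β - 1) := by
        gcongr; exact rpow_mul_rpow_one_sub_le_add ha hd.le hβ₀ hβ₁
    _ = d ^ (β - 1) * (a + d) := mul_comm _ _

lemma rpow_sub_one_mul_rpow_sub_half_le {γ τ M β : ℝ} (hγ : 0 < γ) (hτ : 0 ≤ τ) (hβ : 1 / 2 ≤ β)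
    (h : γ * τ ≤ M) : γ ^ (β - 1) * τ ^ (β - 1 / 2) ≤ M ^ (β - 1 / 2) / γ ^ (1 / 2 : ℝ) :=
  calc γ ^ (β - 1) * τ ^ (β - 1 / 2) = (γ * τ) ^ (β - 1 / 2) / γ ^ (1 / 2 : ℝ) := by
        rw [mul_rpow hγ.le hτ, mul_div_right_comm, ← rpow_sub hγ]; ring_nf
    _ ≤ M ^ (β - 1 / 2) / γ ^ (1 / 2 : ℝ) := by
        gcongr

end Real

open Real

section BetaIntegral

variable {p q t : ℝ}

lemma intervalIntegrable_rpow_mul_rpow_sub_half (hp : -1 < p) (ht : 0 < t) :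
    IntervalIntegrable (fun s ↦ s ^ p * (t - s) ^ q) volume 0 (t / 2) := by
  refine (intervalIntegrable_rpow' hp).mul_continuousOn ?_
  refine ((continuous_sub_left t).continuousOn).rpow_const fun s hs ↦ Or.inl ?_
  rw [uIcc_of_le (by positivity)] at hs
  linarith [hs.2]

lemma integral_rpow_mul_rpow_sub_half_le (hp : -1 < p) (hq : q ≤ 0) (ht : 0 < t) :
    ∫ s in 0..t / 2, s ^ p * (t - s) ^ q ≤ (t / 2) ^ (p + q + 1) / (p + 1) := by
  have ht2 : 0 < t / 2 := by positivity
  calc ∫ s in 0..t / 2, s ^ p * (t - s) ^ q ≤ ∫ s in 0..t / 2, s ^ p * (t / 2) ^ q := by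
        refine integral_mono_on ht2.le (intervalIntegrable_rpow_mul_rpow_sub_half hp ht)
          ((intervalIntegrable_rpow' hp).mul_const _) fun s hs ↦ ?_
        exact mul_le_mul_of_nonneg_left
          (rpow_le_rpow_of_nonpos ht2 (by linarith [hs.2]) hq) (rpow_nonneg hs.1 p)
    _ = (t / 2) ^ (p + q + 1) / (p + 1) := by
        rw [intervalIntegral.integral_mul_const, integral_rpow (Or.inl hp), zero_rpow (by linarith),
          add_right_comm, rpow_add ht2 (p + 1) q]
        ring

lemma integral_upper_half_rpow_mul_rpow_sub_eq :
    ∫ s in t / 2..t, s ^ p * (t - s) ^ q = ∫ s in 0..t / 2, s ^ q * (t - s) ^ p := by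
  have := integral_comp_sub_left (fun s ↦ s ^ q * (t - s) ^ p) t (a := t / 2) (b := t)
  simp only [sub_sub_cancel, sub_self, sub_half] at this
  rw [← this]
  simp_rw [mul_comm]

lemma intervalIntegrable_rpow_mul_rpow_sub (hp : -1 < p) (hq : -1 < q) (ht : 0 < t) :
    IntervalIntegrable (fun s ↦ s ^ p * (t - s) ^ q) volume 0 t := by
  refine (intervalIntegrable_rpow_mul_rpow_sub_half hp ht).trans ?_
  have := (intervalIntegrable_rpow_mul_rpow_sub_half (q := p) hq ht).comp_sub_left t
  simp only [sub_sub_cancel, sub_zero, sub_half] at this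
  simpa only [mul_comm] using this.symm

lemma integral_rpow_mul_rpow_sub_le (hp : -1 < p) (hq : -1 < q) (hp₀ : p ≤ 0) (hq₀ : q ≤ 0)
    (ht : 0 < t) :
    ∫ s in 0..t, s ^ p * (t - s) ^ q ≤ (1 / (p + 1) + 1 / (q + 1)) * (t / 2) ^ (p + q + 1) := by
  have h₁ := integral_rpow_mul_rpow_sub_half_le hp hq₀ ht
  have h₂ := integral_rpow_mul_rpow_sub_half_le hq hp₀ ht
  rw [← integral_add_adjacent_intervals (intervalIntegrable_rpow_mul_rpow_sub_half hp ht)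
    ((intervalIntegrable_rpow_mul_rpow_sub hp hq ht).mono_set ?_),
    integral_upper_half_rpow_mul_rpow_sub_eq]
  · rw [add_comm q p] at h₂
    rw [add_mul, one_div_mul_eq_div, one_div_mul_eq_div]
    exact add_le_add h₁ h₂
  · rw [uIcc_of_le (by linarith), uIcc_of_le ht.le]
    exact Icc_subset_Icc (by linarith) le_rfl

end BetaIntegral

lemma rpow_mul_integral_inv_add_mul_sub_le {a γ t p β : ℝ} (ha : 0 < a) (hγ : 0 < γ)
    (ht : 0 < t) (hp : -1 < p) (hp₀ : p ≤ 0) (hβ₀ : 0 < β) (hβ₁ : β ≤ 1) :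
    a ^ β * ∫ s in 0..t, (a + γ * (t - s)) ^ (-1 : ℝ) * s ^ p
      ≤ (1 / (p + 1) + 1 / β) * (γ ^ (β - 1) * (t / 2) ^ (p + β)) := by
  have hpt : ∀ s ∈ Ioo 0 t, a ^ β * ((a + γ * (t - s)) ^ (-1 : ℝ) * s ^ p)
      ≤ γ ^ (β - 1) * (s ^ p * (t - s) ^ (β - 1)) := fun s hs ↦ by
    have hts : 0 < t - s := sub_pos.2 hs.2
    have hkey := rpow_mul_inv_add_le ha.le (mul_pos hγ hts) hβ₀.le hβ₁
    rw [mul_rpow hγ.le hts.le] at hkey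
    calc a ^ β * ((a + γ * (t - s)) ^ (-1 : ℝ) * s ^ p)
        = a ^ β * (a + γ * (t - s))⁻¹ * s ^ p := by rw [rpow_neg_one, mul_assoc]
      _ ≤ γ ^ (β - 1) * (t - s) ^ (β - 1) * s ^ p :=
        mul_le_mul_of_nonneg_right hkey (rpow_nonneg hs.1.le _)
      _ = γ ^ (β - 1) * (s ^ p * (t - s) ^ (β - 1)) := by ring
  have hint : IntervalIntegrable
      (fun s ↦ a ^ β * ((a + γ * (t - s)) ^ (-1 : ℝ) * s ^ p)) volume 0 t := by
    refine ((intervalIntegrable_rpow' hp).continuousOn_mul ?_).const_mul _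
    refine ContinuousOn.rpow_const (by fun_prop) fun s hs ↦ Or.inl ?_
    rw [uIcc_of_le ht.le] at hs
    nlinarith [hs.2]
  calc a ^ β * ∫ s in 0..t, (a + γ * (t - s)) ^ (-1 : ℝ) * s ^ p
      = ∫ s in 0..t, a ^ β * ((a + γ * (t - s)) ^ (-1 : ℝ) * s ^ p) :=
        (intervalIntegral.integral_const_mul _ _).symm
    _ ≤ ∫ s in 0..t, γ ^ (β - 1) * (s ^ p * (t - s) ^ (β - 1)) :=
        integral_mono_on_of_le_Ioo ht.le hint
          ((intervalIntegrable_rpow_mul_rpow_sub hp (by linarith) ht).const_mul _) hpt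
    _ = γ ^ (β - 1) * ∫ s in 0..t, s ^ p * (t - s) ^ (β - 1) :=
        intervalIntegral.integral_const_mul _ _
    _ ≤ γ ^ (β - 1) * ((1 / (p + 1) + 1 / β) * (t / 2) ^ (p + β)) := by
        gcongr
        refine (integral_rpow_mul_rpow_sub_le (q := β - 1) hp (by linarith) hp₀ (by linarith)
          ht).trans_eq ?_
        ring_nf
    _ = (1 / (p + 1) + 1 / β) * (γ ^ (β - 1) * (t / 2) ^ (p + β)) := by ring

/-- `(μ₀−μ−γt)^β ∫₀ᵗ (μ₀−μ−γs)^{−1} s^{−1/2} ds ≤ C/γ^{1/2}`, `C = C(β, μ₀)`. -/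
theorem stmt_6 (β μ₀ : ℝ) (hβ : 1/2 < β) (hβ1 : β < 1) (hμ₀ : 0 < μ₀) :
    ∃ C : ℝ, 0 < C ∧ ∀ (γ t μ : ℝ), 0 < γ → 0 < t → 0 ≤ μ → μ < μ₀ - γ * t →
      (μ₀ - μ - γ * t) ^ β *
          ∫ s in (0:ℝ)..t, (μ₀ - μ - γ * s) ^ (-1 : ℝ) * s ^ (-(1:ℝ)/2)
        ≤ C / γ ^ ((1:ℝ)/2) := by
  refine ⟨(2 + 1 / β) * μ₀ ^ (β - 1 / 2), by positivity, fun γ t μ hγ ht hμ hμt ↦ ?_⟩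
  set a := μ₀ - μ - γ * t
  have hbase : ∀ s, μ₀ - μ - γ * s = a + γ * (t - s) := fun s ↦ by ring
  simp only [hbase]
  calc a ^ β * ∫ s in (0:ℝ)..t, (a + γ * (t - s)) ^ (-1 : ℝ) * s ^ (-(1:ℝ)/2)
      ≤ (1 / (-(1:ℝ)/2 + 1) + 1 / β) * (γ ^ (β - 1) * (t / 2) ^ (-(1:ℝ)/2 + β)) :=
        rpow_mul_integral_inv_add_mul_sub_le (by linarith) hγ ht (by norm_num) (by norm_num)
          (by linarith) hβ1.le
    _ = (2 + 1 / β) * (γ ^ (β - 1) * (t / 2) ^ (β - 1 / 2)) := by ring_nf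
    _ ≤ (2 + 1 / β) * (μ₀ ^ (β - 1 / 2) / γ ^ ((1:ℝ)/2)) := by
        gcongr
        exact rpow_sub_one_mul_rpow_sub_half_le hγ (by positivity) hβ.le (by linarith)
    _ = (2 + 1 / β) * μ₀ ^ (β - 1 / 2) / γ ^ ((1:ℝ)/2) := mul_div_assoc' _ _ _
end
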